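/- arXiv:1409.4249 — 6 statements merged into one kernel-verified Lean document; each statement's English description precedes it below -/
import Mathlib

section
/- Let E be a Banach space and (T_h)_{h∈ℝ^d} a family of continuous linear operators on E. Let (M_p)_{p∈ℕ} be a sequence of positive real numbers with M_0 = 1 and lim_{p→∞} M_p^{1/p} = ∞, with associated function M. If for every g ∈ E there exist constants C_g > 0 and τ_g > 0 such that ‖T_h g‖_E ≤ C_g e^{M(τ_g |h|)} for all h ∈ ℝ^d, then there exist C > 0 and τ > 0 such that the operator norm satisfies ‖T_h‖ ≤ C e^{M(τ|h|)} for all h ∈ ℝ^d. -/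
/-!
Split `E` into the closed sets `A n` of vectors `g` with `‖T h g‖ ≤ (n + 1) e^{M((n + 1)|h|)}` for
all `h`; since `M` is nondecreasing, the hypothesis says that these sets cover `E`. By Baire, some
`A n` contains a ball `B(x₀, r)`, and `T h z = T h (x₀ + z) - T h x₀` bounds `T h` on `B(0, r)` by
twice the weight, uniformly in `h`; rescaling turns this into a bound on the operator norm.
-/

open Real Filter

/-- The associated function `M(ρ) = sup_{p∈ℕ} log₊(ρ^p / M_p)` of a sequence `(M_p)`. -/
noncomputable def assocFn (Mp : ℕ → ℝ) (ρ : ℝ) : ℝ :=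
  ⨆ p : ℕ, max (Real.log (ρ ^ p / Mp p)) 0

open Set Metric

namespace ContinuousLinearMap

variable {𝕜 𝕜₂ E F : Type*} [NontriviallyNormedField 𝕜] [NontriviallyNormedField 𝕜₂]
  [SeminormedAddCommGroup E] [SeminormedAddCommGroup F] [NormedSpace 𝕜 E] [NormedSpace 𝕜₂ F]
  {σ₁₂ : 𝕜 →+* 𝕜₂} [RingHomIsometric σ₁₂]

theorem opNorm_le_of_forall_mem_ball_le {f : E →SL[σ₁₂] F} {r K : ℝ} (hr : 0 < r) {c : 𝕜}
    (hc : 1 < ‖c‖) (hf : ∀ z ∈ ball 0 r, ‖f z‖ ≤ K) : ‖f‖ ≤ ‖c‖ / r * K := by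
  have hK : 0 ≤ K := (norm_nonneg _).trans (hf 0 (mem_ball_self hr))
  refine opNorm_le_of_shell hr (by positivity) hc fun x _ hx_lt => ?_
  calc ‖f x‖ ≤ K := hf x (mem_ball_zero_iff.2 hx_lt)
    _ = ‖c‖ / r * K * (r / ‖c‖) := by field_simp
    _ ≤ ‖c‖ / r * K * ‖x‖ := by gcongr

theorem exists_opNorm_le_mul_of_forall_exists_le [CompleteSpace E] {ι κ : Type*} [Countable κ]
    (T : ι → E →SL[σ₁₂] F) (w : κ → ι → ℝ) (hT : ∀ g, ∃ n, ∀ i, ‖T i g‖ ≤ w n i) :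
    ∃ n, ∃ C > (0 : ℝ), ∀ i, ‖T i‖ ≤ C * w n i := by
  set A : κ → Set E := fun n => {g | ∀ i, ‖T i g‖ ≤ w n i}
  have hA_closed (n : κ) : IsClosed (A n) := by
    simp only [A, ofPred_forall]
    exact isClosed_iInter fun i => isClosed_le (T i).continuous.norm continuous_const
  have hA_cover : ⋃ n, A n = univ := eq_univ_of_forall fun g => mem_iUnion.2 (hT g)
  obtain ⟨n, x₀, hx₀⟩ := nonempty_interior_of_iUnion_of_closed hA_closed hA_cover
  obtain ⟨r, hr, hball⟩ := Metric.mem_nhds_iff.1 (mem_interior_iff_mem_nhds.1 hx₀)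
  obtain ⟨c, hc⟩ := NormedField.exists_one_lt_norm 𝕜
  refine ⟨n, ‖c‖ / r * 2, by positivity, fun i => ?_⟩
  rw [mul_assoc]
  refine opNorm_le_of_forall_mem_ball_le hr hc fun z hz => ?_
  have hx₀z : x₀ + z ∈ ball x₀ r := by simpa [mem_ball, dist_eq_norm] using hz
  calc ‖T i z‖ = ‖T i (x₀ + z) - T i x₀‖ := by rw [map_add, add_sub_cancel_left]
    _ ≤ ‖T i (x₀ + z)‖ + ‖T i x₀‖ := norm_sub_le _ _
    _ ≤ w n i + w n i := add_le_add (hball hx₀z i) (hball (mem_ball_self hr) i)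
    _ = 2 * w n i := by ring

end ContinuousLinearMap

section AssociatedFunction

variable {Mp : ℕ → ℝ}

theorem bddAbove_range_assocFn (hpos : ∀ p, 0 < Mp p)
    (hlim : Tendsto (fun p : ℕ => Mp p ^ (p : ℝ)⁻¹) atTop atTop) {ρ : ℝ} (hρ : 0 ≤ ρ) :
    BddAbove (range fun p : ℕ => max (log (ρ ^ p / Mp p)) 0) := by
  -- the `p`-th term vanishes as soon as `ρ ≤ M_p^{1/p}`
  refine Tendsto.bddAbove_range (a := 0) (tendsto_const_nhds.congr' ?_)
  filter_upwards [hlim.eventually_ge_atTop ρ, eventually_gt_atTop 0] with p hp hp₀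
  have hρp : ρ ^ p ≤ Mp p := by
    simpa using (le_rpow_inv_iff_of_pos hρ (hpos p).le (Nat.cast_pos.2 hp₀)).1 hp
  have := hpos p
  exact (max_eq_right (log_nonpos (by positivity) ((div_le_one this).2 hρp))).symm

theorem monotoneOn_assocFn (hpos : ∀ p, 0 < Mp p)
    (hlim : Tendsto (fun p : ℕ => Mp p ^ (p : ℝ)⁻¹) atTop atTop) :
    MonotoneOn (assocFn Mp) (Ici 0) := by
  intro a ha b hb hab
  refine ciSup_mono (bddAbove_range_assocFn hpos hlim hb) fun p => ?_
  have := hpos p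
  simpa only [posLog, max_comm] using posLog_le_posLog (div_nonneg (pow_nonneg ha p) this.le)
    (by gcongr : a ^ p / Mp p ≤ b ^ p / Mp p)

theorem exists_mul_exp_assocFn_le_succ (hpos : ∀ p, 0 < Mp p)
    (hlim : Tendsto (fun p : ℕ => Mp p ^ (p : ℝ)⁻¹) atTop atTop) (C : ℝ) {τ : ℝ} (hτ : 0 ≤ τ) :
    ∃ n : ℕ, ∀ t ≥ (0 : ℝ),
      C * exp (assocFn Mp (τ * t)) ≤ (n + 1) * exp (assocFn Mp ((n + 1) * t)) := by
  obtain ⟨n, hn⟩ := exists_nat_ge (max C τ)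
  refine ⟨n, fun t ht => ?_⟩
  have hC : C ≤ n + 1 := by linarith [le_max_left C τ]
  have hτn : τ ≤ n + 1 := by linarith [le_max_right C τ]
  have hM : assocFn Mp (τ * t) ≤ assocFn Mp ((n + 1) * t) :=
    monotoneOn_assocFn hpos hlim (mem_Ici.2 (by positivity)) (mem_Ici.2 (by positivity))
      (by gcongr)
  gcongr

end AssociatedFunction

theorem stmt_2_general (d : ℕ) {E : Type*} [NormedAddCommGroup E] [NormedSpace ℝ E] [CompleteSpace E]
    (Mp : ℕ → ℝ) (hpos : ∀ p, 0 < Mp p)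
    (hlim : Tendsto (fun p : ℕ => Mp p ^ (p : ℝ)⁻¹) atTop atTop)
    (T : EuclideanSpace ℝ (Fin d) → E →L[ℝ] E)
    (hb : ∀ g : E, ∃ C > (0 : ℝ), ∃ τ > (0 : ℝ), ∀ h : EuclideanSpace ℝ (Fin d),
      ‖T h g‖ ≤ C * Real.exp (assocFn Mp (τ * ‖h‖))) :
    ∃ C > (0 : ℝ), ∃ τ > (0 : ℝ), ∀ h : EuclideanSpace ℝ (Fin d),
      ‖T h‖ ≤ C * Real.exp (assocFn Mp (τ * ‖h‖)) := by
  have hcover (g : E) :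
      ∃ n : ℕ, ∀ h, ‖T h g‖ ≤ (n + 1) * exp (assocFn Mp ((n + 1) * ‖h‖)) := by
    obtain ⟨C, -, τ, hτ, hg⟩ := hb g
    obtain ⟨n, hn⟩ := exists_mul_exp_assocFn_le_succ hpos hlim C hτ.le
    exact ⟨n, fun h => (hg h).trans (hn _ (norm_nonneg h))⟩
  obtain ⟨n, C, hC, hT⟩ := ContinuousLinearMap.exists_opNorm_le_mul_of_forall_exists_le T _ hcover
  refine ⟨C * (n + 1), by positivity, n + 1, by positivity, fun h => ?_⟩
  simpa only [mul_assoc] using hT h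

theorem stmt_2 (d : ℕ) {E : Type*} [NormedAddCommGroup E] [NormedSpace ℝ E] [CompleteSpace E]
    (Mp : ℕ → ℝ) (hpos : ∀ p, 0 < Mp p) (hM0 : Mp 0 = 1)
    (hlim : Tendsto (fun p : ℕ => Mp p ^ (p : ℝ)⁻¹) atTop atTop)
    (T : EuclideanSpace ℝ (Fin d) → E →L[ℝ] E)
    (hb : ∀ g : E, ∃ C > (0 : ℝ), ∃ τ > (0 : ℝ), ∀ h : EuclideanSpace ℝ (Fin d),
      ‖T h g‖ ≤ C * Real.exp (assocFn Mp (τ * ‖h‖))) :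
    ∃ C > (0 : ℝ), ∃ τ > (0 : ℝ), ∀ h : EuclideanSpace ℝ (Fin d),
      ‖T h‖ ≤ C * Real.exp (assocFn Mp (τ * ‖h‖)) :=
  stmt_2_general d Mp hpos hlim T hb
end

section
/- Let E be a Banach space and (T_h)_{h∈ℝ^d} a family of continuous linear operators on E. Let (M_p)_{p∈ℕ} be a sequence of positive real numbers with M_0 = 1 and lim_{p→∞} M_p^{1/p} = ∞, with associated function M. If for every g ∈ E and every τ > 0 there exists a constant C_{g,τ} > 0 such that ‖T_h g‖_E ≤ C_{g,τ} e^{M(τ|h|)} for all h ∈ ℝ^d, then for every τ > 0 there exists C_τ > 0 such that the operator norm satisfies ‖T_h‖ ≤ C_τ e^{M(τ|h|)} for all h ∈ ℝ^d. -/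
open Real Filter

/-- Rescaling `T i` by `(w i)⁻¹` turns the weighted pointwise bounds into pointwise boundedness,
so that Banach–Steinhaus applies. -/
theorem ContinuousLinearMap.exists_norm_le_mul_of_forall_norm_apply_le_mul
    {ι 𝕜 E F : Type*} [RCLike 𝕜] [NormedAddCommGroup E] [NormedSpace 𝕜 E] [CompleteSpace E]
    [NormedAddCommGroup F] [NormedSpace 𝕜 F] (T : ι → E →L[𝕜] F) (w : ι → ℝ)
    (hw : ∀ i, 0 < w i) (hT : ∀ g, ∃ C, ∀ i, ‖T i g‖ ≤ C * w i) :
    ∃ C > 0, ∀ i, ‖T i‖ ≤ C * w i := by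
  have hnorm_inv : ∀ i, ‖((w i)⁻¹ : 𝕜)‖ = (w i)⁻¹ := fun i => by
    rw [← RCLike.ofReal_inv, RCLike.norm_of_nonneg (inv_nonneg.2 (hw i).le)]
  have hbounded : ∀ g, ∃ C, ∀ i, ‖(((w i)⁻¹ : 𝕜) • T i) g‖ ≤ C := fun g => by
    obtain ⟨C, hC⟩ := hT g
    refine ⟨C, fun i => ?_⟩
    rw [smul_apply, norm_smul, hnorm_inv, inv_mul_le_iff₀ (hw i), mul_comm]
    exact hC i
  obtain ⟨C, hC⟩ := banach_steinhaus hbounded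
  refine ⟨max C 1, one_pos.trans_le (le_max_right _ _), fun i => ?_⟩
  have hi := (hC i).trans (le_max_left C 1)
  rwa [norm_smul, hnorm_inv, inv_mul_le_iff₀ (hw i), mul_comm] at hi

theorem stmt_3_general (d : ℕ) {E : Type*} [NormedAddCommGroup E] [NormedSpace ℝ E] [CompleteSpace E]
    (Mp : ℕ → ℝ)
    (T : EuclideanSpace ℝ (Fin d) → E →L[ℝ] E)
    (hb : ∀ g : E, ∀ τ > (0 : ℝ), ∃ C > (0 : ℝ), ∀ h : EuclideanSpace ℝ (Fin d),
      ‖T h g‖ ≤ C * Real.exp (assocFn Mp (τ * ‖h‖))) :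
    ∀ τ > (0 : ℝ), ∃ C > (0 : ℝ), ∀ h : EuclideanSpace ℝ (Fin d),
      ‖T h‖ ≤ C * Real.exp (assocFn Mp (τ * ‖h‖)) := by
  intro τ hτ
  refine ContinuousLinearMap.exists_norm_le_mul_of_forall_norm_apply_le_mul T _
    (fun _ => exp_pos _) fun g => ?_
  obtain ⟨C, -, hC⟩ := hb g τ hτ
  exact ⟨C, hC⟩

theorem stmt_3 (d : ℕ) {E : Type*} [NormedAddCommGroup E] [NormedSpace ℝ E] [CompleteSpace E]
    (Mp : ℕ → ℝ) (hpos : ∀ p, 0 < Mp p) (hM0 : Mp 0 = 1)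
    (hlim : Tendsto (fun p : ℕ => Mp p ^ (p : ℝ)⁻¹) atTop atTop)
    (T : EuclideanSpace ℝ (Fin d) → E →L[ℝ] E)
    (hb : ∀ g : E, ∀ τ > (0 : ℝ), ∃ C > (0 : ℝ), ∀ h : EuclideanSpace ℝ (Fin d),
      ‖T h g‖ ≤ C * Real.exp (assocFn Mp (τ * ‖h‖))) :
    ∀ τ > (0 : ℝ), ∃ C > (0 : ℝ), ∀ h : EuclideanSpace ℝ (Fin d),
      ‖T h‖ ≤ C * Real.exp (assocFn Mp (τ * ‖h‖)) :=
  stmt_3_general d Mp T hb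
end

section
/- Let (M_p)_{p∈ℕ} be a sequence of positive real numbers with M_0 = 1 and lim_{p→∞} M_p^{1/p} = ∞ satisfying conditions (M.1), (M.2) and (M.3), with associated function M. Let ω : ℝ^d → (0,∞) be a function such that for every τ > 0 there exists C_τ > 0 with ω(h) ≤ C_τ e^{M(τ|h|)} for all h ∈ ℝ^d. Then there exist a nondecreasing sequence (l_p)_{p≥1} of positive real numbers with l_p → ∞ and a constant C > 0 such that ω(h) ≤ C e^{N_{l_p}(|h|)} for all h ∈ ℝ^d, where N_{l_p}(ρ) = sup_{p∈ℕ} log₊( ρ^p / (M_p ∏_{j=1}^{p} l_j) ). -/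
open Real Filter

/-- The associated function `N_{l_p}(ρ) = sup_{p∈ℕ} log₊(ρ^p / (M_p ∏_{j=1}^p l_j))`. -/
noncomputable def assocFnSeq (Mp : ℕ → ℝ) (l : ℕ → ℝ) (ρ : ℝ) : ℝ :=
  ⨆ p : ℕ, max (Real.log (ρ ^ p / (Mp p * ∏ j ∈ Finset.Icc 1 p, l j))) 0

/-!
Each bound `ω ≤ C_τ e^{M(τ|h|)}` loses its constant for large `|h|`, because
`M(2σ) - M(σ) → ∞`. This gives radii `φ_k → ∞` with `ω(h) ≤ e^{M(|h|/(k+1))}` for `|h| ≥ φ_k`.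
For `|h| ≤ φ_{k+1}` only the indices `p < P_k` contribute to `M(|h|/(k+1))`, so there
`M(|h|/(k+1)) ≤ N_{l_p}(|h|)` as soon as `l_j ≤ k + 1` for `j < P_k`; a nondecreasing unbounded
sequence satisfying these finitely many constraints for every `k` always exists.
-/

lemma eventually_pow_le_of_tendsto_rpow_inv {W : ℕ → ℝ} (hWpos : ∀ p, 0 < W p)
    (hW : Tendsto (fun p : ℕ => W p ^ (p : ℝ)⁻¹) atTop atTop) (r : ℝ) :
    ∀ᶠ p in atTop, r ^ p ≤ W p := by
  filter_upwards [hW.eventually_ge_atTop |r|, eventually_ge_atTop 1] with p hp hp1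
  calc r ^ p ≤ |r| ^ p := (le_abs_self _).trans (abs_pow r p).le
    _ ≤ (W p ^ (p : ℝ)⁻¹) ^ p := pow_le_pow_left₀ (abs_nonneg r) hp p
    _ = W p := rpow_inv_natCast_pow (hWpos p).le (by omega)

lemma Nat.exists_monotone_tendsto_atTop_le (f : ℕ → ℕ) :
    ∃ g : ℕ → ℕ, Monotone g ∧ Tendsto g atTop atTop ∧ ∀ k j, j ≤ f k → g j ≤ k := by
  set F : ℕ → ℕ := fun k => (Finset.range (k + 1)).sup f + k
  have hF : Monotone F := fun a b hab =>
    add_le_add (Finset.sup_mono (Finset.range_subset_range.2 (by omega))) hab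
  have hex : ∀ j, ∃ k, j ≤ F k := fun j => ⟨j, Nat.le_add_left j _⟩
  refine ⟨fun j => Nat.find (hex j), fun a b hab => Nat.find_mono fun k => hab.trans,
    tendsto_atTop_atTop.2 fun K => ⟨F K + 1, fun j hj => ?_⟩, fun k j hj => ?_⟩
  · exact Nat.le_find_iff _ _ |>.2 fun m hm hjm => by have := hF hm.le; omega
  · exact Nat.find_min' (hex j) (hj.trans ((Finset.le_sup (Finset.self_mem_range_succ k)).trans
      (Nat.le_add_right _ _)))

lemma assocFn_eq_iSup_posLog (W : ℕ → ℝ) (ρ : ℝ) :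
    assocFn W ρ = ⨆ p, log⁺ (ρ ^ p / W p) := by
  simp only [assocFn, posLog_apply, max_comm]

lemma assocFn_nonneg (W : ℕ → ℝ) (ρ : ℝ) : 0 ≤ assocFn W ρ := by
  rw [assocFn_eq_iSup_posLog]
  exact iSup_nonneg fun _ => posLog_nonneg

lemma assocFn_mul (W : ℕ → ℝ) (τ ρ : ℝ) :
    assocFn W (τ * ρ) = assocFn (fun p => W p / τ ^ p) ρ := by
  simp only [assocFn, mul_pow, div_div_eq_mul_div, mul_comm (τ ^ _)]

section AssocFn

variable {W V : ℕ → ℝ}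

lemma bddAbove_range_posLog_div (hW : ∀ r, ∀ᶠ p in atTop, r ^ p ≤ W p) (ρ : ℝ) :
    BddAbove (Set.range fun p => log⁺ (ρ ^ p / W p)) := by
  refine (isBoundedUnder_of_eventually_le (a := 0) ?_).bddAbove_range
  filter_upwards [hW |ρ|, hW 1] with p hρ h1
  rw [one_pow] at h1
  have hWp : 0 < W p := by linarith
  rw [(posLog_eq_zero_iff _).2]
  rw [abs_div, abs_pow, abs_of_pos hWp, div_le_one hWp]
  exact hρ

lemma posLog_le_assocFn (hW : ∀ r, ∀ᶠ p in atTop, r ^ p ≤ W p) (ρ : ℝ) (p : ℕ) :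
    log⁺ (ρ ^ p / W p) ≤ assocFn W ρ := by
  rw [assocFn_eq_iSup_posLog]
  exact le_ciSup (bddAbove_range_posLog_div hW ρ) p

lemma log_le_assocFn (hW : ∀ r, ∀ᶠ p in atTop, r ^ p ≤ W p) (ρ : ℝ) (p : ℕ) :
    log (ρ ^ p / W p) ≤ assocFn W ρ :=
  (le_max_right _ _).trans (posLog_le_assocFn hW ρ p)

lemma assocFn_mono (hW : ∀ r, ∀ᶠ p in atTop, r ^ p ≤ W p) (hWnonneg : ∀ p, 0 ≤ W p)
    {ρ ρ' : ℝ} (hρ : 0 ≤ ρ) (hρρ' : ρ ≤ ρ') : assocFn W ρ ≤ assocFn W ρ' := by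
  rw [assocFn_eq_iSup_posLog]
  exact ciSup_le fun p => (posLog_le_posLog (div_nonneg (pow_nonneg hρ p) (hWnonneg p))
    (div_le_div_of_nonneg_right (pow_le_pow_left₀ hρ hρρ' p) (hWnonneg p))).trans
    (posLog_le_assocFn hW ρ' p)

lemma assocFn_le_assocFn_of_le (hV : ∀ r, ∀ᶠ p in atTop, r ^ p ≤ V p) (hVpos : ∀ p, 0 < V p)
    {P : ℕ} {R ρ : ℝ} (hVW : ∀ p < P, V p ≤ W p) (hRW : ∀ p ≥ P, R ^ p ≤ W p)
    (hρ : 0 ≤ ρ) (hρR : ρ ≤ R) : assocFn W ρ ≤ assocFn V ρ := by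
  rw [assocFn_eq_iSup_posLog]
  refine ciSup_le fun p => ?_
  rcases lt_or_ge p P with hp | hp
  · have hWp : 0 < W p := (hVpos p).trans_le (hVW p hp)
    exact (posLog_le_posLog (div_nonneg (pow_nonneg hρ p) hWp.le)
      (div_le_div_of_nonneg_left (pow_nonneg hρ p) (hVpos p) (hVW p hp))).trans
      (posLog_le_assocFn hV ρ p)
  · have hρW : ρ ^ p ≤ W p := (pow_le_pow_left₀ hρ hρR p).trans (hRW p hp)
    have hWp : 0 ≤ W p := (pow_nonneg hρ p).trans hρW
    have hle : |ρ ^ p / W p| ≤ 1 := by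
      rw [abs_of_nonneg (div_nonneg (pow_nonneg hρ p) hWp)]
      exact div_le_one_of_le₀ hρW hWp
    rw [(posLog_eq_zero_iff _).2 hle]
    exact assocFn_nonneg V ρ

/-- Doubling the argument raises each term `p ≥ m` by `p log 2`; the hypotheses make the `m`-th
term dominate the earlier ones. -/
lemma assocFn_add_mul_log_two_le (hW : ∀ r, ∀ᶠ p in atTop, r ^ p ≤ W p)
    (hWpos : ∀ p, 0 < W p) {σ : ℝ} (hσ : 0 < σ) {m : ℕ} (hm : W m ≤ σ ^ m)
    (hmax : ∀ p < m, W m / W p ≤ σ ^ (m - p)) :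
    assocFn W σ + m * log 2 ≤ assocFn W (2 * σ) := by
  have hterm : ∀ p : ℕ, log (σ ^ p / W p) + p * log 2 ≤ assocFn W (2 * σ) := fun p => by
    have h := log_le_assocFn hW (2 * σ) p
    rwa [mul_pow, mul_div_assoc, log_mul (by positivity) (div_pos (pow_pos hσ p) (hWpos p)).ne',
      log_pow, add_comm] at h
  have hlog2 : 0 ≤ log 2 := log_nonneg one_le_two
  have hm_nonneg : 0 ≤ log (σ ^ m / W m) := log_nonneg ((one_le_div (hWpos m)).2 hm)
  rw [← le_sub_iff_add_le, assocFn_eq_iSup_posLog]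
  refine ciSup_le fun p => ?_
  rw [le_sub_iff_add_le, posLog_apply, ← max_add_add_right]
  refine max_le (by linarith [hterm m]) ?_
  rcases lt_or_ge p m with hp | hp
  · have hpm : σ ^ p / W p ≤ σ ^ m / W m := by
      rw [div_le_div_iff₀ (hWpos p) (hWpos m), ← pow_sub_mul_pow σ hp.le,
        mul_comm (σ ^ (m - p)), mul_assoc]
      exact mul_le_mul_of_nonneg_left ((div_le_iff₀ (hWpos p)).1 (hmax p hp))
        (pow_nonneg hσ.le p)
    linarith [hterm m, log_le_log (div_pos (pow_pos hσ p) (hWpos p)) hpm]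
  · have : (m : ℝ) * log 2 ≤ p * log 2 := mul_le_mul_of_nonneg_right (by exact_mod_cast hp) hlog2
    linarith [hterm p]

theorem tendsto_assocFn_two_mul_sub (hW : ∀ r, ∀ᶠ p in atTop, r ^ p ≤ W p)
    (hWpos : ∀ p, 0 < W p) :
    Tendsto (fun σ => assocFn W (2 * σ) - assocFn W σ) atTop atTop := by
  refine tendsto_atTop.2 fun b => ?_
  obtain ⟨m, hm⟩ := exists_nat_ge (b / log 2)
  have hb : b ≤ (m + 1 : ℕ) * log 2 := by
    rw [div_le_iff₀ (log_pos one_lt_two)] at hm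
    push_cast
    nlinarith [log_pos one_lt_two]
  have hmax : ∀ᶠ σ in atTop, ∀ p ∈ Finset.range (m + 1), W (m + 1) / W p ≤ σ ^ (m + 1 - p) :=
    (Finset.range (m + 1)).eventually_all.2 fun p hp =>
      (tendsto_pow_atTop (by have := Finset.mem_range.1 hp; omega)).eventually_ge_atTop _
  filter_upwards [eventually_gt_atTop 0,
    (tendsto_pow_atTop (Nat.succ_ne_zero m)).eventually_ge_atTop (W (m + 1)), hmax]
    with σ hσ hm hmax
  have := assocFn_add_mul_log_two_le hW hWpos hσ hm fun p hp => hmax p (Finset.mem_range.2 hp)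
  linarith

lemma eventually_le_exp_assocFn {E : Type*} [Norm E] {ω : E → ℝ}
    (hW : ∀ r, ∀ᶠ p in atTop, r ^ p ≤ W p) (hWpos : ∀ p, 0 < W p) {τ C : ℝ} (hτ : 0 < τ)
    (hC : 0 < C) (hωC : ∀ h, ω h ≤ C * exp (assocFn W (τ / 2 * ‖h‖))) :
    ∀ᶠ R in atTop, ∀ h, R ≤ ‖h‖ → ω h ≤ exp (assocFn W (τ * ‖h‖)) := by
  obtain ⟨S, hS⟩ := eventually_atTop.1
    ((tendsto_assocFn_two_mul_sub hW hWpos).eventually_ge_atTop (log C))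
  filter_upwards [eventually_ge_atTop (2 * S / τ)] with R hR h hRh
  have hσ : S ≤ τ / 2 * ‖h‖ := by
    rw [div_le_iff₀ hτ] at hR
    nlinarith
  calc ω h ≤ C * exp (assocFn W (τ / 2 * ‖h‖)) := hωC h
    _ = exp (log C + assocFn W (τ / 2 * ‖h‖)) := by rw [exp_add, exp_log hC]
    _ ≤ exp (assocFn W (2 * (τ / 2 * ‖h‖))) := exp_le_exp.2 (by linarith [hS _ hσ])
    _ = exp (assocFn W (τ * ‖h‖)) := by ring_nf

end AssocFn

lemma assocFn_mul_le_assocFnSeq {Mp l : ℕ → ℝ} (hM : ∀ r, ∀ᶠ p in atTop, r ^ p ≤ Mp p)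
    (hpos : ∀ p, 0 < Mp p) (hl : ∀ j, 1 ≤ l j) {τ R ρ : ℝ} {P : ℕ} (hτ : 0 < τ)
    (hlτ : ∀ j < P, l j ≤ τ⁻¹) (hR : ∀ p ≥ P, (τ * R) ^ p ≤ Mp p) (hρ : 0 ≤ ρ) (hρR : ρ ≤ R) :
    assocFn Mp (τ * ρ) ≤ assocFnSeq Mp l ρ := by
  have hprod : ∀ p, 1 ≤ ∏ j ∈ Finset.Icc 1 p, l j := fun p =>
    Finset.one_le_prod fun j _ => hl j
  rw [assocFn_mul]
  refine assocFn_le_assocFn_of_le (P := P) (V := fun p => Mp p * ∏ j ∈ Finset.Icc 1 p, l j)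
    (fun r => (hM r).mono fun p hp => hp.trans (le_mul_of_one_le_right (hpos p).le (hprod p)))
    (fun p => mul_pos (hpos p) (zero_lt_one.trans_le (hprod p))) (fun p hp => ?_)
    (fun p hp => ?_) hρ hρR
  · calc Mp p * ∏ j ∈ Finset.Icc 1 p, l j ≤ Mp p * ∏ _j ∈ Finset.Icc 1 p, τ⁻¹ :=
          mul_le_mul_of_nonneg_left (Finset.prod_le_prod (fun j _ => zero_le_one.trans (hl j))
            fun j hj => hlτ j ((Finset.mem_Icc.1 hj).2.trans_lt hp)) (hpos p).le
      _ = Mp p / τ ^ p := by simp [div_eq_mul_inv]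
  · rw [le_div_iff₀ (pow_pos hτ p), mul_comm, ← mul_pow]
    exact hR p hp

lemma exists_le_exp_assocFnSeq_of_radii {E : Type*} [SeminormedAddCommGroup E] {ω : E → ℝ}
    {Mp : ℕ → ℝ} (hM : ∀ r, ∀ᶠ p in atTop, r ^ p ≤ Mp p) (hpos : ∀ p, 0 < Mp p) {φ : ℕ → ℕ}
    (hφ : StrictMono φ)
    (hφω : ∀ k h, (φ k : ℝ) ≤ ‖h‖ → ω h ≤ exp (assocFn Mp (((k : ℝ) + 1)⁻¹ * ‖h‖))) :
    ∃ l : ℕ → ℝ, (∀ p, 0 < l p) ∧ Monotone l ∧ Tendsto l atTop atTop ∧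
      ∀ h, (φ 0 : ℝ) < ‖h‖ → ω h ≤ exp (assocFnSeq Mp l ‖h‖) := by
  choose P hP using fun k : ℕ => eventually_atTop.1 (hM (((k : ℝ) + 1)⁻¹ * φ (k + 1)))
  obtain ⟨g, hg_mono, hg_tendsto, hgP⟩ := Nat.exists_monotone_tendsto_atTop_le P
  refine ⟨fun j => g j + 1, fun j => by positivity, fun a b hab => by simpa using hg_mono hab,
    tendsto_atTop_add_const_right _ 1 (tendsto_natCast_atTop_atTop.comp hg_tendsto),
    fun h hh => ?_⟩
  obtain ⟨k, hk, hk'⟩ := StrictMono.exists_between_of_tendsto_atTop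
    (t := fun k => (φ k : ℝ)) (Nat.strictMono_cast.comp hφ)
    (tendsto_natCast_atTop_atTop.comp hφ.tendsto_atTop) hh
  have hl : ∀ j < P k, (g j : ℝ) + 1 ≤ ((k : ℝ) + 1)⁻¹⁻¹ := fun j hj => by
    rw [inv_inv]
    exact_mod_cast Nat.add_le_add_right (hgP k j hj.le) 1
  exact (hφω k h hk.le).trans <| exp_le_exp.2 <| assocFn_mul_le_assocFnSeq hM hpos
    (fun j => le_add_of_nonneg_left (Nat.cast_nonneg _)) (by positivity) hl (hP k)
    (norm_nonneg h) hk'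

theorem stmt_4_general (d : ℕ) (Mp : ℕ → ℝ) (hpos : ∀ p, 0 < Mp p)
    (hlim : Tendsto (fun p : ℕ => Mp p ^ (p : ℝ)⁻¹) atTop atTop)
    (ω : EuclideanSpace ℝ (Fin d) → ℝ)
    (hbound : ∀ τ > (0 : ℝ), ∃ C > (0 : ℝ), ∀ h : EuclideanSpace ℝ (Fin d),
      ω h ≤ C * Real.exp (assocFn Mp (τ * ‖h‖))) :
    ∃ l : ℕ → ℝ, (∀ p, 0 < l p) ∧ Monotone l ∧ Tendsto l atTop atTop ∧
      ∃ C > (0 : ℝ), ∀ h : EuclideanSpace ℝ (Fin d),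
        ω h ≤ C * Real.exp (assocFnSeq Mp l ‖h‖) := by
  have hM := eventually_pow_le_of_tendsto_rpow_inv hpos hlim
  obtain ⟨φ, hφ, hφω⟩ := extraction_forall_of_eventually fun k : ℕ => by
    obtain ⟨C, hC, hωC⟩ := hbound (((k : ℝ) + 1)⁻¹ / 2) (by positivity)
    exact tendsto_natCast_atTop_atTop.eventually
      (eventually_le_exp_assocFn hM hpos (by positivity) hC hωC)
  obtain ⟨l, hl_pos, hl_mono, hl_tendsto, hωl⟩ := exists_le_exp_assocFnSeq_of_radii hM hpos hφ hφω
  obtain ⟨C, hC, hωC⟩ := hbound 1 one_pos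
  refine ⟨l, hl_pos, hl_mono, hl_tendsto, max 1 (C * exp (assocFn Mp (φ 0))), by positivity,
    fun h => ?_⟩
  have hexp : 1 ≤ exp (assocFnSeq Mp l ‖h‖) := one_le_exp (assocFn_nonneg _ _)
  rcases le_or_gt ‖h‖ (φ 0) with hsmall | hlarge
  · have hmono : assocFn Mp (1 * ‖h‖) ≤ assocFn Mp (φ 0) :=
      assocFn_mono hM (fun p => (hpos p).le) (by positivity) (by simpa using hsmall)
    have hball : ω h ≤ C * exp (assocFn Mp (φ 0)) := (hωC h).trans (by gcongr)
    exact hball.trans ((le_max_right _ _).trans (le_mul_of_one_le_right (by positivity) hexp))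
  · exact (hωl h hlarge).trans (le_mul_of_one_le_left (exp_pos _).le (le_max_left _ _))

theorem stmt_4 (d : ℕ) (Mp : ℕ → ℝ) (hpos : ∀ p, 0 < Mp p) (hM0 : Mp 0 = 1)
    (hlim : Tendsto (fun p : ℕ => Mp p ^ (p : ℝ)⁻¹) atTop atTop)
    (hM1 : ∀ p : ℕ, Mp (p + 1) ^ 2 ≤ Mp p * Mp (p + 2))
    (c0 H : ℝ) (hc0 : 1 ≤ c0) (hH : 1 ≤ H)
    (hM2 : ∀ p q : ℕ, Mp (p + q) ≤ c0 * H ^ (p + q) * (Mp p * Mp q))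
    (hM3 : ∀ q : ℕ, 1 ≤ q →
      ∑' k : ℕ, Mp (q + k) / Mp (q + k + 1) ≤ c0 * q * (Mp q / Mp (q + 1)))
    (ω : EuclideanSpace ℝ (Fin d) → ℝ) (hω : ∀ h, 0 < ω h)
    (hbound : ∀ τ > (0 : ℝ), ∃ C > (0 : ℝ), ∀ h : EuclideanSpace ℝ (Fin d),
      ω h ≤ C * Real.exp (assocFn Mp (τ * ‖h‖))) :
    ∃ l : ℕ → ℝ, (∀ p, 0 < l p) ∧ Monotone l ∧ Tendsto l atTop atTop ∧
      ∃ C > (0 : ℝ), ∀ h : EuclideanSpace ℝ (Fin d),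
        ω h ≤ C * Real.exp (assocFnSeq Mp l ‖h‖) :=
  stmt_4_general d Mp hpos hlim ω hbound
end

section
/- Let 1 ≤ p < ∞ and let η : ℝ^d → (0,∞) be measurable with ω_η(h) < ∞ for every h ∈ ℝ^d. Then for each h ∈ ℝ^d the translation T_{-h} is a bounded linear operator on L^p_η, one has ‖T_{-h} g‖_{L^p_η} ≤ ω_η(h) ‖g‖_{L^p_η} for every g ∈ L^p_η, and ω_η(h) is the operator norm of T_{-h} on L^p_η, i.e. ω_η(h) = sup{ ‖T_{-h} g‖_{L^p_η} : g ∈ L^p_η, ‖g‖_{L^p_η} ≤ 1 }. -/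
/-!
Since `η x * g (x - h) = (η x / η (x - h)) * (η g) (x - h)` and Lebesgue measure is translation
invariant, `T_{-h}` has norm at most `ω_η(h)` on `L^p_η`. Conversely, for `c < ω_η(h)` the set
where `η (· + h) / η > c` has positive measure, and `g = a / η` on a subset of finite positive
measure, with `a` normalising `‖η g‖_p = 1`, satisfies `‖η · g (· - h)‖_p ≥ c`.
-/

open MeasureTheory ENNReal
open scoped NNReal

/-- The weight function `ω_η(h) = ess sup_x η(x+h)/η(x)` of a weight `η`. -/
noncomputable def weightFn (d : ℕ) (η : EuclideanSpace ℝ (Fin d) → ℝ)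
    (h : EuclideanSpace ℝ (Fin d)) : ℝ≥0∞ :=
  essSup (fun x => ENNReal.ofReal (η (x + h) / η x)) volume

lemma enorm_mul_eq_ofReal_div_mul_enorm {a b : ℝ} (ha : 0 ≤ a) (hb : 0 < b) (u : ℝ) :
    ‖a * u‖ₑ = ENNReal.ofReal (a / b) * ‖b * u‖ₑ := by
  rw [← Real.enorm_of_nonneg (div_nonneg ha hb.le), ← enorm_mul, ← mul_assoc,
    div_mul_cancel₀ a hb.ne']

lemma exists_measurableSet_forall_lt_of_lt_essSup {α : Type*} [MeasurableSpace α]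
    {μ : Measure α} [SigmaFinite μ] {f : α → ℝ≥0∞} (hf : Measurable f) {c : ℝ≥0∞}
    (hc : c < essSup f μ) :
    ∃ S, MeasurableSet S ∧ 0 < μ S ∧ μ S < ∞ ∧ ∀ x ∈ S, c < f x := by
  have hpos : 0 < μ {x | c < f x} := by
    refine pos_iff_ne_zero.2 fun h0 => hc.not_ge (essSup_le_of_ae_le c ?_)
    rw [Filter.EventuallyLE, ae_iff]
    simpa using h0
  obtain ⟨S, hS, hSsub, hSpos, hSfin⟩ :=
    Measure.exists_subset_measure_lt_top (measurableSet_lt measurable_const hf) hpos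
  exact ⟨S, hS, hSpos, hSfin, hSsub⟩

lemma exists_eLpNorm_indicator_const_eq_one {α : Type*} [MeasurableSpace α] {μ : Measure α}
    {p : ℝ≥0∞} (hp : p ≠ 0) {S : Set α} (hS : MeasurableSet S) (hS0 : 0 < μ S)
    (hSfin : μ S < ∞) :
    ∃ a : ℝ, eLpNorm (S.indicator fun _ => a) p μ = 1 := by
  set v := μ S ^ (1 / p.toReal)
  have hv0 : v ≠ 0 := (ENNReal.rpow_pos hS0 hSfin.ne).ne'
  have hvtop : v ≠ ∞ := ENNReal.rpow_ne_top_of_nonneg (by positivity) hSfin.ne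
  refine ⟨v.toReal⁻¹, ?_⟩
  rw [eLpNorm_indicator_const' hS hS0.ne' hp, Real.enorm_of_nonneg (by positivity),
    ENNReal.ofReal_inv_of_pos (ENNReal.toReal_pos hv0 hvtop), ENNReal.ofReal_toReal hvtop,
    ENNReal.inv_mul_cancel hv0 hvtop]

section Translation

variable {G : Type*} [MeasurableSpace G] [AddGroup G] [MeasurableAdd G] (μ : Measure G)
  [μ.IsAddRightInvariant]

theorem eLpNorm_comp_sub_right {ε : Type*} [TopologicalSpace ε] [ContinuousENorm ε]
    (f : G → ε) (p : ℝ≥0∞) (h : G) :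
    eLpNorm (fun x => f (x - h)) p μ = eLpNorm f p μ := by
  conv_rhs => rw [← map_sub_right_eq_self μ h]
  exact (measurableEmbedding_subRight h).eLpNorm_map_measure.symm

theorem essSup_comp_sub_right {β : Type*} [CompleteLattice β] (f : G → β) (h : G) :
    essSup (fun x => f (x - h)) μ = essSup f μ := by
  conv_rhs => rw [← map_sub_right_eq_self μ h]
  exact (measurableEmbedding_subRight h).essSup_map_measure.symm

/-- `weightFn` is the case of Lebesgue measure on `ℝ^d`. -/
noncomputable def translationWeight (η : G → ℝ) (h : G) : ℝ≥0∞ :=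
  essSup (fun x => ENNReal.ofReal (η (x + h) / η x)) μ

variable {μ} {η : G → ℝ}

lemma ae_ofReal_div_comp_sub_le_translationWeight (h : G) :
    ∀ᵐ x ∂μ, ENNReal.ofReal (η x / η (x - h)) ≤ translationWeight μ η h := by
  rw [translationWeight]
  have := ae_le_essSup (μ := μ) fun x => ENNReal.ofReal (η (x - h + h) / η (x - h))
  rw [essSup_comp_sub_right μ (fun y => ENNReal.ofReal (η (y + h) / η y)) h] at this
  simpa only [sub_add_cancel] using this

theorem eLpNorm_mul_comp_sub_le (hpos : ∀ x, 0 < η x) {h : G}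
    (hfin : translationWeight μ η h ≠ ∞) (g : G → ℝ) (p : ℝ≥0∞) :
    eLpNorm (fun x => η x * g (x - h)) p μ ≤
      translationWeight μ η h * eLpNorm (fun x => η x * g x) p μ := by
  have hbound : ∀ᵐ x ∂μ, ‖η x * g (x - h)‖ₑ ≤
      (translationWeight μ η h).toNNReal * ‖η (x - h) * g (x - h)‖ₑ := by
    filter_upwards [ae_ofReal_div_comp_sub_le_translationWeight h] with x hx
    rw [enorm_mul_eq_ofReal_div_mul_enorm (hpos x).le (hpos (x - h)), coe_toNNReal hfin]
    exact mul_le_mul_left hx _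
  calc eLpNorm (fun x => η x * g (x - h)) p μ
      ≤ (translationWeight μ η h).toNNReal *
          eLpNorm (fun x => η (x - h) * g (x - h)) p μ :=
        eLpNorm_le_mul_eLpNorm_of_ae_le_mul' hbound p
    _ = translationWeight μ η h * eLpNorm (fun x => η x * g x) p μ := by
        rw [coe_toNNReal hfin, eLpNorm_comp_sub_right μ (fun x => η x * g x)]

theorem exists_le_eLpNorm_mul_comp_sub [SigmaFinite μ] {p : ℝ≥0∞} (hp : p ≠ 0)
    (hmeas : Measurable η) (hpos : ∀ x, 0 < η x) {h : G} {c : ℝ≥0}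
    (hc : c < translationWeight μ η h) :
    ∃ g : G → ℝ, Measurable g ∧ eLpNorm (fun x => η x * g x) p μ ≤ 1 ∧
      c ≤ eLpNorm (fun x => η x * g (x - h)) p μ := by
  obtain ⟨S, hS, hS0, hSfin, hcS⟩ := exists_measurableSet_forall_lt_of_lt_essSup
    ((hmeas.comp (measurable_add_const h)).div hmeas).ennreal_ofReal hc
  obtain ⟨a, ha⟩ := exists_eLpNorm_indicator_const_eq_one hp hS hS0 hSfin
  set g := S.indicator fun y => a / η y
  have hηg : (fun x => η x * g x) = S.indicator fun _ => a := by
    funext x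
    by_cases hx : x ∈ S <;> simp [g, hx, mul_div_cancel₀ _ (hpos x).ne']
  have hc_enorm : ‖(c : ℝ)‖ₑ = c := by
    rw [Real.enorm_of_nonneg c.coe_nonneg, ofReal_coe_nnreal]
  have hpointwise : ∀ y, ‖(c : ℝ) • (η y * g y)‖ₑ ≤ ‖η (y + h) * g y‖ₑ := by
    intro y
    rw [enorm_smul, hc_enorm, enorm_mul_eq_ofReal_div_mul_enorm (hpos (y + h)).le (hpos y)]
    by_cases hy : y ∈ S
    · exact mul_le_mul_left (hcS y hy).le _
    · simp [g, hy]
  refine ⟨g, (measurable_const.div hmeas).indicator hS, by rw [hηg, ha], ?_⟩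
  calc (c : ℝ≥0∞) = ‖(c : ℝ)‖ₑ * eLpNorm (fun x => η x * g x) p μ := by
        rw [hηg, ha, mul_one, hc_enorm]
    _ = eLpNorm ((c : ℝ) • fun x => η x * g x) p μ := (eLpNorm_const_smul _ _ _ _).symm
    _ ≤ eLpNorm (fun y => η (y + h) * g y) p μ := eLpNorm_mono_enorm hpointwise
    _ = eLpNorm (fun x => η x * g (x - h)) p μ := by
        rw [← eLpNorm_comp_sub_right μ _ p h]
        simp only [sub_add_cancel]

end Translation

theorem stmt_5_general (d : ℕ) (p : ℝ≥0∞) (hp1 : 1 ≤ p)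
    (η : EuclideanSpace ℝ (Fin d) → ℝ) (hmeas : Measurable η) (hpos : ∀ x, 0 < η x)
    (hfin : ∀ h, weightFn d η h ≠ ∞) (h : EuclideanSpace ℝ (Fin d)) :
    (∀ g : EuclideanSpace ℝ (Fin d) → ℝ,
      eLpNorm (fun x => η x * g (x - h)) p volume ≤
        weightFn d η h * eLpNorm (fun x => η x * g x) p volume) ∧
    weightFn d η h =
      ⨆ g : {g : EuclideanSpace ℝ (Fin d) → ℝ //
          Measurable g ∧ eLpNorm (fun x => η x * g x) p volume ≤ 1},
        eLpNorm (fun x => η x * g.1 (x - h)) p volume := by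
  have hbound g := eLpNorm_mul_comp_sub_le (μ := volume) hpos (hfin h) g p
  refine ⟨hbound, le_antisymm ?_ (iSup_le fun g => ?_)⟩
  · refine ENNReal.le_of_forall_nnreal_lt fun c hc => ?_
    obtain ⟨g, hg, hg1, hcg⟩ :=
      exists_le_eLpNorm_mul_comp_sub (zero_lt_one.trans_le hp1).ne' hmeas hpos hc
    exact hcg.trans (le_iSup_of_le ⟨g, hg, hg1⟩ le_rfl)
  · exact (hbound g.1).trans (mul_le_of_le_one_right' g.2.2)

theorem stmt_5 (d : ℕ) (p : ℝ≥0∞) (hp1 : 1 ≤ p) (hp : p ≠ ∞)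
    (η : EuclideanSpace ℝ (Fin d) → ℝ) (hmeas : Measurable η) (hpos : ∀ x, 0 < η x)
    (hfin : ∀ h, weightFn d η h ≠ ∞) (h : EuclideanSpace ℝ (Fin d)) :
    (∀ g : EuclideanSpace ℝ (Fin d) → ℝ,
      eLpNorm (fun x => η x * g (x - h)) p volume ≤
        weightFn d η h * eLpNorm (fun x => η x * g x) p volume) ∧
    weightFn d η h =
      ⨆ g : {g : EuclideanSpace ℝ (Fin d) → ℝ //
          Measurable g ∧ eLpNorm (fun x => η x * g x) p volume ≤ 1},
        eLpNorm (fun x => η x * g.1 (x - h)) p volume :=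
  stmt_5_general d p hp1 η hmeas hpos hfin h
end

section
/- Let M : [0,∞) → [0,∞) be nondecreasing with ∫₁^∞ M(s) s^{-2} ds < ∞, and let η̃(ρ) = ρ ∫_ρ^∞ M(s) s^{-2} ds for ρ > 0, η̃(0) = 0. Then η̃ is nondecreasing on [0,∞) and concave on (0,∞). -/
open MeasureTheory

/-- `η̃(ρ) = ρ ∫_ρ^∞ M(s) s⁻² ds` (with `η̃(0) = 0`, as the factor `ρ` vanishes). -/
noncomputable def etaTilde (M : ℝ → ℝ) (ρ : ℝ) : ℝ :=
  ρ * ∫ s in Set.Ioi ρ, M s / s ^ 2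

/-!
Write `I(ρ) = ∫_ρ^∞ M(s) s⁻² ds`. Bounding `M` on `[x, y]` by its value at an endpoint and
using `∫_x^y s⁻² ds = 1/x - 1/y`, every secant slope of `η̃` on an interval `[x, y] ⊆ (0, ∞)`
is at least `I(y) - M(y)/y`, and every secant slope on `[y, z]` is at most this same number
(the right derivative of `η̃` at `y`). Hence the slopes decrease, which is concavity; and
`I(y) ≥ M(y)/y` because `M` is nondecreasing, so the slopes are nonnegative, which gives
monotonicity away from `0`, where `η̃(0) = 0`.
-/

open Set intervalIntegral

lemma MeasureTheory.IntegrableOn.intervalIntegrable_of_Ioi {f : ℝ → ℝ} {x y : ℝ}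
    (hf : IntegrableOn f (Ioi x)) (hxy : x ≤ y) : IntervalIntegrable f volume x y :=
  (intervalIntegrable_iff_integrableOn_Ioc_of_le hxy).2 (hf.mono_set Ioc_subset_Ioi_self)

lemma div_sq_eqOn_mul_rpow (c : ℝ) {y : ℝ} (hy : 0 ≤ y) :
    EqOn (fun s : ℝ => c / s ^ 2) (fun s => c * s ^ (-2 : ℝ)) (Ioi y) := fun s hs => by
  simp only [Real.rpow_neg (hy.trans (le_of_lt hs)), Real.rpow_two, div_eq_mul_inv]

lemma integrableOn_Ioi_div_sq (c : ℝ) {y : ℝ} (hy : 0 < y) :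
    IntegrableOn (fun s : ℝ => c / s ^ 2) (Ioi y) :=
  IntegrableOn.congr_fun
    ((integrableOn_Ioi_rpow_of_lt (by norm_num : (-2 : ℝ) < -1) hy).const_mul c)
    (div_sq_eqOn_mul_rpow c hy.le).symm measurableSet_Ioi

lemma integral_Ioi_div_sq (c : ℝ) {y : ℝ} (hy : 0 < y) :
    ∫ s in Ioi y, c / s ^ 2 = c / y := by
  rw [setIntegral_congr_fun measurableSet_Ioi (div_sq_eqOn_mul_rpow c hy.le),
    MeasureTheory.integral_const_mul, integral_Ioi_rpow_of_lt (by norm_num) hy]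
  norm_num [Real.rpow_neg_one, div_eq_mul_inv]

lemma integral_div_sq (c : ℝ) {x y : ℝ} (hx : 0 < x) (hxy : x ≤ y) :
    ∫ s in x..y, c / s ^ 2 = c / x - c / y := by
  rw [← integral_Ioi_sub_Ioi (integrableOn_Ioi_div_sq c hx) hxy, integral_Ioi_div_sq c hx,
    integral_Ioi_div_sq c (hx.trans_le hxy)]

variable {M : ℝ → ℝ}

lemma integrableOn_Ioi_div_sq_of_monotoneOn (hmono : MonotoneOn M (Ici 0))
    (hint : IntegrableOn (fun s => M s / s ^ 2) (Ioi 1)) {ρ : ℝ} (hρ : 0 < ρ) :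
    IntegrableOn (fun s => M s / s ^ 2) (Ioi ρ) := by
  have hIcc : IntegrableOn (fun s => M s / s ^ 2) (Icc ρ 1) := by
    have hM : IntegrableOn M (Icc ρ 1) :=
      (hmono.mono fun s hs => hρ.le.trans hs.1).integrableOn_isCompact isCompact_Icc
    simpa only [div_eq_mul_inv] using hM.mul_continuousOn (g' := fun s : ℝ => (s ^ 2)⁻¹)
      ((continuousOn_id.pow 2).inv₀ fun s hs => (pow_pos (hρ.trans_le hs.1) 2).ne') isCompact_Icc
  refine (hIcc.union hint).mono_set fun s hs => ?_
  rcases le_or_gt s 1 with h | h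
  exacts [Or.inl ⟨le_of_lt hs, h⟩, Or.inr h]

lemma div_le_integral_Ioi_div_sq (hmono : MonotoneOn M (Ici 0))
    (hint : IntegrableOn (fun s => M s / s ^ 2) (Ioi 1)) {y : ℝ} (hy : 0 < y) :
    M y / y ≤ ∫ s in Ioi y, M s / s ^ 2 := by
  rw [← integral_Ioi_div_sq (M y) hy]
  refine setIntegral_mono_on (integrableOn_Ioi_div_sq _ hy)
    (integrableOn_Ioi_div_sq_of_monotoneOn hmono hint hy) measurableSet_Ioi fun s hs => ?_
  gcongr
  exact hmono hy.le (hy.trans hs).le (le_of_lt hs)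

lemma integral_div_sq_le (hmono : MonotoneOn M (Ici 0))
    (hint : IntegrableOn (fun s => M s / s ^ 2) (Ioi 1)) {x y : ℝ} (hx : 0 < x) (hxy : x ≤ y) :
    ∫ s in x..y, M s / s ^ 2 ≤ M y / x - M y / y := by
  rw [← integral_div_sq (M y) hx hxy]
  refine integral_mono_on hxy
    ((integrableOn_Ioi_div_sq_of_monotoneOn hmono hint hx).intervalIntegrable_of_Ioi hxy)
    ((integrableOn_Ioi_div_sq _ hx).intervalIntegrable_of_Ioi hxy) fun s hs => ?_
  have hs0 : 0 < s := hx.trans_le hs.1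
  gcongr
  exact hmono hs0.le (hx.trans_le hxy).le hs.2

lemma le_integral_div_sq (hmono : MonotoneOn M (Ici 0))
    (hint : IntegrableOn (fun s => M s / s ^ 2) (Ioi 1)) {x y : ℝ} (hx : 0 < x) (hxy : x ≤ y) :
    M x / x - M x / y ≤ ∫ s in x..y, M s / s ^ 2 := by
  rw [← integral_div_sq (M x) hx hxy]
  refine integral_mono_on hxy ((integrableOn_Ioi_div_sq _ hx).intervalIntegrable_of_Ioi hxy)
    ((integrableOn_Ioi_div_sq_of_monotoneOn hmono hint hx).intervalIntegrable_of_Ioi hxy)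
    fun s hs => ?_
  gcongr
  exact hmono hx.le (hx.trans_le hs.1).le hs.1

lemma etaTilde_sub_etaTilde (hmono : MonotoneOn M (Ici 0))
    (hint : IntegrableOn (fun s => M s / s ^ 2) (Ioi 1)) {x y : ℝ} (hx : 0 < x) (hxy : x ≤ y) :
    etaTilde M y - etaTilde M x =
      (y - x) * (∫ s in Ioi y, M s / s ^ 2) - x * ∫ s in x..y, M s / s ^ 2 := by
  rw [etaTilde, etaTilde, ← integral_interval_add_Ioi
    (integrableOn_Ioi_div_sq_of_monotoneOn hmono hint hx)
    (integrableOn_Ioi_div_sq_of_monotoneOn hmono hint (hx.trans_le hxy))]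
  ring

lemma integral_Ioi_sub_div_le_slope_etaTilde (hmono : MonotoneOn M (Ici 0))
    (hint : IntegrableOn (fun s => M s / s ^ 2) (Ioi 1)) {x y : ℝ} (hx : 0 < x) (hxy : x < y) :
    (∫ s in Ioi y, M s / s ^ 2) - M y / y ≤ (etaTilde M y - etaTilde M x) / (y - x) := by
  have hy : 0 < y := hx.trans hxy
  have hbound := mul_le_mul_of_nonneg_left (integral_div_sq_le hmono hint hx hxy.le) hx.le
  have hid : x * (M y / x - M y / y) = (y - x) * (M y / y) := by field_simp
  rw [le_div_iff₀ (sub_pos.2 hxy), etaTilde_sub_etaTilde hmono hint hx hxy.le]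
  linarith

lemma slope_etaTilde_le_integral_Ioi_sub_div (hmono : MonotoneOn M (Ici 0))
    (hint : IntegrableOn (fun s => M s / s ^ 2) (Ioi 1)) {y z : ℝ} (hy : 0 < y) (hyz : y < z) :
    (etaTilde M z - etaTilde M y) / (z - y) ≤ (∫ s in Ioi y, M s / s ^ 2) - M y / y := by
  have hz : 0 < z := hy.trans hyz
  have hbound := mul_le_mul_of_nonneg_left (le_integral_div_sq hmono hint hy hyz.le) hz.le
  have hid : z * (M y / y - M y / z) = (z - y) * (M y / y) := by field_simp
  rw [div_le_iff₀ (sub_pos.2 hyz), etaTilde_sub_etaTilde hmono hint hy hyz.le,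
    ← integral_interval_add_Ioi (integrableOn_Ioi_div_sq_of_monotoneOn hmono hint hy)
    (integrableOn_Ioi_div_sq_of_monotoneOn hmono hint hz)]
  linarith

lemma etaTilde_nonneg (hnonneg : ∀ s, 0 ≤ s → 0 ≤ M s) {y : ℝ} (hy : 0 ≤ y) :
    0 ≤ etaTilde M y :=
  mul_nonneg hy <| setIntegral_nonneg measurableSet_Ioi fun s hs =>
    div_nonneg (hnonneg s (hy.trans (le_of_lt hs))) (sq_nonneg s)

lemma concaveOn_etaTilde (hmono : MonotoneOn M (Ici 0))
    (hint : IntegrableOn (fun s => M s / s ^ 2) (Ioi 1)) :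
    ConcaveOn ℝ (Ioi 0) (etaTilde M) :=
  concaveOn_of_slope_anti_adjacent (convex_Ioi 0) fun hx _ hxy hyz =>
    (slope_etaTilde_le_integral_Ioi_sub_div hmono hint (lt_trans hx hxy) hyz).trans
      (integral_Ioi_sub_div_le_slope_etaTilde hmono hint hx hxy)

lemma monotoneOn_etaTilde (hnonneg : ∀ s, 0 ≤ s → 0 ≤ M s) (hmono : MonotoneOn M (Ici 0))
    (hint : IntegrableOn (fun s => M s / s ^ 2) (Ioi 1)) :
    MonotoneOn (etaTilde M) (Ici 0) := by
  intro x (hx : 0 ≤ x) y _ hxy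
  rcases hx.eq_or_lt with rfl | hx
  · simpa [etaTilde] using etaTilde_nonneg hnonneg hxy
  rcases hxy.eq_or_lt with rfl | hxy
  · rfl
  have hy : 0 < y := hx.trans hxy
  have hslope := (sub_nonneg.2 (div_le_integral_Ioi_div_sq hmono hint hy)).trans
    (integral_Ioi_sub_div_le_slope_etaTilde hmono hint hx hxy)
  rwa [le_div_iff₀ (sub_pos.2 hxy), zero_mul, sub_nonneg] at hslope

theorem stmt_9 (M : ℝ → ℝ) (hnonneg : ∀ s, 0 ≤ s → 0 ≤ M s)
    (hmono : MonotoneOn M (Set.Ici (0 : ℝ)))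
    (hint : IntegrableOn (fun s => M s / s ^ 2) (Set.Ioi (1 : ℝ))) :
    MonotoneOn (etaTilde M) (Set.Ici (0 : ℝ)) ∧
    ConcaveOn ℝ (Set.Ioi (0 : ℝ)) (etaTilde M) :=
  ⟨monotoneOn_etaTilde hnonneg hmono hint, concaveOn_etaTilde hmono hint⟩
end

section
/- Let F be a normed space, let (M_p)_{p∈ℕ} be a sequence of positive real numbers, and let 0 < m₁ < m ≤ 1 and C > 0. For each n ∈ ℕ let x_n : ℕ^d → F satisfy sup_{α∈ℕ^d} m^{|α|} ‖x_n(α)‖ / M_{|α|} ≤ C. Assume that for every ε > 0 there exists N such that for all n, k ≥ N: sup_{α∈ℕ^d} ‖x_n(α) − x_k(α)‖ / (M_{|α|} · |α|!) ≤ ε. Then for every ε > 0 there exists N such that for all n, k ≥ N: sup_{α∈ℕ^d} m₁^{|α|} ‖x_n(α) − x_k(α)‖ / M_{|α|} ≤ ε. -/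
/-!
Split the multi-indices by their order `p = |α|`. For large `p` the uniform bound with the
larger weight `m` wins: `m₁ ^ p = (m₁ / m) ^ p * m ^ p` and `(m₁ / m) ^ p → 0`. For the finitely
many small orders, `m₁ ^ p ≤ 1` and `p ! ≤ p₀ !`, so the Cauchy condition for the denominators
`M_p * p !` with tolerance `ε / p₀ !` suffices.
-/

open Filter Topology
open scoped Nat

theorem weighted_norm_sub_le_of_weighted_norm_le {F : Type*} [SeminormedAddCommGroup F]
    {m m₁ M C : ℝ} (hm : 0 < m) (hm₁ : 0 ≤ m₁) (hM : 0 ≤ M) {a b : F} (p : ℕ)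
    (ha : m ^ p * ‖a‖ / M ≤ C) (hb : m ^ p * ‖b‖ / M ≤ C) :
    m₁ ^ p * ‖a - b‖ / M ≤ (m₁ / m) ^ p * (2 * C) := by
  have hsub : m ^ p * ‖a - b‖ / M ≤ 2 * C :=
    calc m ^ p * ‖a - b‖ / M ≤ m ^ p * ‖a‖ / M + m ^ p * ‖b‖ / M := by
          rw [← add_div, ← mul_add]
          gcongr
          exact norm_sub_le a b
      _ ≤ 2 * C := by linarith
  calc m₁ ^ p * ‖a - b‖ / M = (m₁ / m) ^ p * (m ^ p * ‖a - b‖ / M) := by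
        rw [mul_div_assoc, mul_div_assoc, ← mul_assoc, div_pow,
          div_mul_cancel₀ _ (pow_ne_zero p hm.ne')]
    _ ≤ (m₁ / m) ^ p * (2 * C) := by gcongr

theorem pow_mul_div_le_mul_factorial {m₁ M A δ : ℝ} (hm₁ : 0 ≤ m₁) (hm₁_le : m₁ ≤ 1)
    {p q : ℕ} (hpq : p ≤ q) (hδ : 0 ≤ δ) (h : A / (M * p !) ≤ δ) :
    m₁ ^ p * A / M ≤ δ * q ! := by
  have hweight : m₁ ^ p * p ! ≤ q ! :=
    (mul_le_of_le_one_left (by positivity) (pow_le_one₀ hm₁ hm₁_le)).trans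
      (mod_cast Nat.factorial_le hpq)
  calc m₁ ^ p * A / M = A / (M * p !) * (m₁ ^ p * p !) := by
        field_simp
    _ ≤ δ * (m₁ ^ p * p !) := by gcongr
    _ ≤ δ * q ! := by gcongr

theorem stmt_12_general {F : Type*} [NormedAddCommGroup F] (d : ℕ)
    (Mp : ℕ → ℝ) (hMp : ∀ p, 0 < Mp p)
    (m m1 C : ℝ) (hm1 : 0 < m1) (hm1m : m1 < m) (hm : m ≤ 1)
    (x : ℕ → (Fin d → ℕ) → F)
    (hb : ∀ (n : ℕ) (α : Fin d → ℕ), m ^ (∑ i, α i) * ‖x n α‖ / Mp (∑ i, α i) ≤ C)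
    (hc : ∀ ε > (0 : ℝ), ∃ N : ℕ, ∀ n k : ℕ, N ≤ n → N ≤ k → ∀ α : Fin d → ℕ,
      ‖x n α - x k α‖ / (Mp (∑ i, α i) * (Nat.factorial (∑ i, α i) : ℝ)) ≤ ε) :
    ∀ ε > (0 : ℝ), ∃ N : ℕ, ∀ n k : ℕ, N ≤ n → N ≤ k → ∀ α : Fin d → ℕ,
      m1 ^ (∑ i, α i) * ‖x n α - x k α‖ / Mp (∑ i, α i) ≤ ε := by
  intro ε hε
  have hm0 : 0 < m := hm1.trans hm1m
  have hdecay : Tendsto (fun p : ℕ => (m1 / m) ^ p * (2 * C)) atTop (𝓝 0) := by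
    simpa using (tendsto_pow_atTop_nhds_zero_of_lt_one (div_pos hm1 hm0).le
      ((div_lt_one hm0).2 hm1m)).mul_const (2 * C)
  obtain ⟨p₀, hp₀⟩ := eventually_atTop.1 (hdecay.eventually (gt_mem_nhds hε))
  obtain ⟨N, hN⟩ := hc (ε / p₀ !) (by positivity)
  refine ⟨N, fun n k hn hk α => ?_⟩
  rcases le_or_gt p₀ (∑ i, α i) with hlarge | hsmall
  · exact (weighted_norm_sub_le_of_weighted_norm_le hm0 hm1.le (hMp _).le _ (hb n α) (hb k α)).trans
      (hp₀ _ hlarge).le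
  · have := pow_mul_div_le_mul_factorial hm1.le (hm1m.le.trans hm) hsmall.le (by positivity)
      (hN n k hn hk α)
    rwa [div_mul_cancel₀ _ (by positivity)] at this

theorem stmt_12 {F : Type*} [NormedAddCommGroup F] (d : ℕ)
    (Mp : ℕ → ℝ) (hMp : ∀ p, 0 < Mp p)
    (m m1 C : ℝ) (hm1 : 0 < m1) (hm1m : m1 < m) (hm : m ≤ 1) (hC : 0 < C)
    (x : ℕ → (Fin d → ℕ) → F)
    (hb : ∀ (n : ℕ) (α : Fin d → ℕ), m ^ (∑ i, α i) * ‖x n α‖ / Mp (∑ i, α i) ≤ C)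
    (hc : ∀ ε > (0 : ℝ), ∃ N : ℕ, ∀ n k : ℕ, N ≤ n → N ≤ k → ∀ α : Fin d → ℕ,
      ‖x n α - x k α‖ / (Mp (∑ i, α i) * (Nat.factorial (∑ i, α i) : ℝ)) ≤ ε) :
    ∀ ε > (0 : ℝ), ∃ N : ℕ, ∀ n k : ℕ, N ≤ n → N ≤ k → ∀ α : Fin d → ℕ,
      m1 ^ (∑ i, α i) * ‖x n α - x k α‖ / Mp (∑ i, α i) ≤ ε :=
  stmt_12_general d Mp hMp m m1 C hm1 hm1m hm x hb hc
end
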